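/- Let N ≥ 1, let S ⊆ ℝ^N be compact, let h ∈ B_S, and let D ⊆ ℝ^N be a bounded measurable set with nonempty interior. Then h is the unique fixed point of the operator T_h^{(D)} on B_S: T_h^{(D)} h = h, and any f ∈ B_S satisfying T_h^{(D)} f = f equals h almost everywhere. -/

import Mathlib

open MeasureTheory FourierTransform Filter

noncomputable section

/-- The Hilbert space `L²(ℝᴺ; ℂ)` of square-integrable functions on `ℝᴺ`. -/
abbrev L2Space (N : ℕ) : Type :=
  Lp ℂ 2 (volume : Measure (EuclideanSpace ℝ (Fin N)))

/-- `f ∈ L²(ℝᴺ)` is bandlimited to `S`: its Fourier transform vanishes (a.e.) outside `S`;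
equivalently, `f` agrees a.e. with the inverse Fourier transform of an integrable function `F`
vanishing outside `S`. -/
def IsBandlimited {N : ℕ} (S : Set (EuclideanSpace ℝ (Fin N))) (f : L2Space N) : Prop :=
  ∃ F : EuclideanSpace ℝ (Fin N) → ℂ,
    Integrable F ∧ (∀ k, k ∉ S → F k = 0) ∧
      (f : EuclideanSpace ℝ (Fin N) → ℂ) =ᵐ[volume] 𝓕⁻ F

/-- Multiplication of `f ∈ L²` by the indicator function `χ_D`, as an element of `L²`. -/
def chiMul {N : ℕ} {D : Set (EuclideanSpace ℝ (Fin N))} (hD : MeasurableSet D)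
    (f : L2Space N) : L2Space N :=
  ((Lp.memLp f).indicator hD).toLp (D.indicator f)

/-- The orthogonal projection of `L²(ℝᴺ)` onto a closed subspace `K`. -/
def projOf {N : ℕ} (K : Submodule ℂ (L2Space N)) (hK : IsClosed (K : Set (L2Space N))) :
    L2Space N → L2Space N :=
  haveI : CompleteSpace K := hK.completeSpace_coe
  fun f => (K.orthogonalProjectionOnto f : L2Space N)

/-- The operator `T_h^{(D)} f = P_S (f + χ_D (h − f))` (single region). -/
def Tsingle {N : ℕ} (K : Submodule ℂ (L2Space N)) (hK : IsClosed (K : Set (L2Space N)))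
    {D : Set (EuclideanSpace ℝ (Fin N))} (hD : MeasurableSet D)
    (h f : L2Space N) : L2Space N :=
  projOf K hK (f + chiMul hD (h - f))

/-! If `T_h^{(D)} f = f` with `f ∈ B_S`, then `χ_D (h - f)` is orthogonal to `B_S`, in particular
to `h - f`; since `χ_D` is an orthogonal projection, `‖χ_D (h - f)‖² = ⟪h - f, χ_D (h - f)⟫ = 0`.
So `h - f = 𝓕⁻ F` with `F` integrable and supported in the compact set `S` vanishes on the open
set `interior D`. Along any real line, `𝓕⁻ F` is the restriction of an entire function (the
support of `F` is bounded), so by the identity theorem it vanishes everywhere. -/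

open Complex Real Topology
open scoped RealInnerProductSpace

section EntireExtension

variable {α E : Type*} [MeasurableSpace α] {μ : Measure α}
  [NormedAddCommGroup E] [NormedSpace ℂ E]

theorem differentiable_integral_cexp_mul_smul {g : α → E} (hg : Integrable g μ)
    {c : α → ℂ} (hc : AEStronglyMeasurable c μ) {C : ℝ}
    (hC : ∀ a ∈ Function.support g, ‖c a‖ ≤ C) :
    Differentiable ℂ fun z => ∫ a, cexp (z * c a) • g a ∂μ := by
  have hexp : ∀ a z, ‖cexp (z * c a) • g a‖ ≤ Real.exp (‖z‖ * C) * ‖g a‖ := by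
    intro a z
    rcases eq_or_ne (g a) 0 with hga | hga
    · simp [hga]
    rw [norm_smul]
    gcongr
    calc ‖cexp (z * c a)‖ ≤ Real.exp ‖z * c a‖ := norm_exp_le_exp_norm _
      _ ≤ Real.exp (‖z‖ * C) := by rw [norm_mul]; gcongr; exact hC a hga
  have hmeas : ∀ z : ℂ, AEStronglyMeasurable (fun a => cexp (z * c a) • g a) μ := fun z =>
    (continuous_exp.comp_aestronglyMeasurable (hc.const_mul z)).smul hg.1
  intro z₀
  refine (hasDerivAt_integral_of_dominated_loc_of_deriv_le (Metric.ball_mem_nhds z₀ one_pos)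
    (F' := fun z a => c a • cexp (z * c a) • g a)
    (bound := fun a => C * (Real.exp ((‖z₀‖ + 1) * C) * ‖g a‖))
    (Eventually.of_forall hmeas)
    ((hg.norm.const_mul _).mono' (hmeas z₀) (ae_of_all _ (hexp · z₀)))
    (hc.smul (hmeas z₀)) ?_ ((hg.norm.const_mul _).const_mul _) ?_).2.differentiableAt
  · refine ae_of_all _ fun a z hz => ?_
    rcases eq_or_ne (g a) 0 with hga | hga
    · simp [hga]
    have hz : ‖z‖ ≤ ‖z₀‖ + 1 := by
      have := norm_le_norm_add_norm_sub' z z₀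
      rw [Metric.mem_ball, dist_eq_norm] at hz
      linarith
    have hC0 : 0 ≤ C := (norm_nonneg _).trans (hC a hga)
    rw [norm_smul]
    gcongr
    · exact hC a hga
    · exact (hexp a z).trans (by gcongr)
  · refine ae_of_all _ fun a z _ => ?_
    simpa [smul_smul, mul_comm] using
      ((hasDerivAt_id z).mul_const (c a)).cexp.smul_const (g a)

theorem Differentiable.eq_zero_of_eventually_ofReal [CompleteSpace E] {Φ : ℂ → E}
    (hΦ : Differentiable ℂ Φ) {t₀ : ℝ} (h : ∀ᶠ t : ℝ in 𝓝 t₀, Φ t = 0) : Φ = 0 := by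
  have hreal : Tendsto ((↑) : ℝ → ℂ) (𝓝[≠] t₀) (𝓝[≠] (t₀ : ℂ)) :=
    continuous_ofReal.continuousWithinAt.tendsto_nhdsWithin fun t ht => by simpa using ht
  have hfreq : ∃ᶠ z in 𝓝[≠] (t₀ : ℂ), Φ z = 0 :=
    hreal.frequently (h.filter_mono nhdsWithin_le_nhds).frequently
  have hanalytic : AnalyticOnNhd ℂ Φ Set.univ := hΦ.differentiableOn.analyticOnNhd isOpen_univ
  funext z
  exact hanalytic.eqOn_zero_of_preconnected_of_frequently_eq_zero isPreconnected_univ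
    (Set.mem_univ _) hfreq (Set.mem_univ z)

end EntireExtension

section FourierInv

variable {V E : Type*} [NormedAddCommGroup V] [InnerProductSpace ℝ V] [FiniteDimensional ℝ V]
  [MeasurableSpace V] [BorelSpace V] [NormedAddCommGroup E] [NormedSpace ℂ E]

theorem MeasureTheory.Integrable.continuous_fourierInv {F : V → E} (hF : Integrable F) :
    Continuous (𝓕⁻ F) :=
  VectorFourier.fourierIntegral_continuous continuous_fourierChar
    (continuous_inner.neg : Continuous fun p : V × V => -⟪p.1, p.2⟫) hF

theorem exists_differentiable_eq_fourierInv_lineMap {F : V → E} (hF : Integrable F)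
    (hFc : HasCompactSupport F) (x₀ x : V) :
    ∃ Φ : ℂ → E, Differentiable ℂ Φ ∧ ∀ t : ℝ, Φ t = 𝓕⁻ F (AffineMap.lineMap x₀ x t) := by
  obtain ⟨R, hR⟩ := isBounded_iff_forall_norm_le.1 hFc.isCompact.isBounded
  set g : V → E := fun v => cexp (↑(2 * π * ⟪v, x₀⟫) * I) • F v
  set c : V → ℂ := fun v => ↑(2 * π * ⟪v, x - x₀⟫) * I
  have hg : Integrable g := by
    refine hF.norm.mono' (by fun_prop) (ae_of_all _ fun v => ?_)
    rw [norm_smul, norm_exp_ofReal_mul_I, one_mul]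
  have hc : ∀ v ∈ Function.support g, ‖c v‖ ≤ 2 * π * (R * ‖x - x₀‖) := by
    intro v hv
    have hvR : ‖v‖ ≤ R := hR v (subset_tsupport F (Function.support_smul_subset_right _ _ hv))
    rw [norm_mul, norm_I, mul_one, norm_real, Real.norm_eq_abs, abs_mul,
      abs_of_pos Real.two_pi_pos]
    gcongr
    exact (abs_real_inner_le_norm v _).trans (by gcongr)
  refine ⟨fun z => ∫ v, cexp (z * c v) • g v,
    differentiable_integral_cexp_mul_smul hg (by fun_prop) hc, fun t => ?_⟩
  rw [fourierInv_eq']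
  refine integral_congr_ae (ae_of_all _ fun v => ?_)
  simp only [g, c, smul_smul, ← Complex.exp_add, AffineMap.lineMap_apply_module', inner_add_right,
    inner_smul_right]
  push_cast
  ring_nf

theorem fourierInv_eq_zero_of_eqOn_zero [CompleteSpace E] {F : V → E} (hF : Integrable F)
    (hFc : HasCompactSupport F) {U : Set V} (hU : IsOpen U) (hUne : U.Nonempty)
    (hzero : Set.EqOn (𝓕⁻ F) 0 U) : 𝓕⁻ F = 0 := by
  obtain ⟨x₀, hx₀⟩ := hUne
  funext x
  obtain ⟨Φ, hΦ, hΦline⟩ := exists_differentiable_eq_fourierInv_lineMap hF hFc x₀ x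
  have hline : ∀ᶠ t : ℝ in 𝓝 0, AffineMap.lineMap x₀ x t ∈ U :=
    ((AffineMap.lineMap_continuous (p := x₀) (q := x) (R := ℝ)).tendsto' 0 x₀ (by simp)).eventually
      (hU.mem_nhds hx₀)
  have hΦ0 : Φ = 0 := hΦ.eq_zero_of_eventually_ofReal <| by
    filter_upwards [hline] with t ht using (hΦline t).trans (hzero ht)
  simpa [hΦ0] using (hΦline 1).symm

end FourierInv

theorem eqOn_interior_of_ae_imp_eq_zero {X Y : Type*} [TopologicalSpace X] [MeasurableSpace X]
    [OpensMeasurableSpace X] {μ : Measure X} [μ.IsOpenPosMeasure] [TopologicalSpace Y]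
    [T2Space Y] [Zero Y] {g : X → Y}
    (hg : Continuous g) {D : Set X} (h : ∀ᵐ x ∂μ, x ∈ D → g x = 0) :
    Set.EqOn g 0 (interior D) :=
  Measure.eqOn_open_of_ae_eq ((ae_restrict_iff' measurableSet_interior).2
      (h.mono fun _ hx hxD => hx (interior_subset hxD)))
    isOpen_interior hg.continuousOn continuousOn_const

section Projection

variable {N : ℕ} {K : Submodule ℂ (L2Space N)} (hK : IsClosed (K : Set (L2Space N)))

theorem projOf_eq_self {f : L2Space N} (hf : f ∈ K) : projOf K hK f = f :=
  haveI : CompleteSpace K := hK.completeSpace_coe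
  K.starProjection_eq_self_iff.2 hf

theorem mem_orthogonal_of_projOf_add_eq {f w : L2Space N} (hf : f ∈ K)
    (h : projOf K hK (f + w) = f) : w ∈ Kᗮ := by
  have : CompleteSpace K := hK.completeSpace_coe
  have hw : projOf K hK w = 0 := by
    have hadd : projOf K hK (f + w) = projOf K hK f + projOf K hK w := by
      simp only [projOf, map_add, Submodule.coe_add]
    rwa [h, projOf_eq_self hK hf, left_eq_add] at hadd
  exact K.orthogonalProjectionOnto_eq_zero_iff.1 (Submodule.coe_eq_zero.1 hw)

end Projection

section IndicatorMul

variable {N : ℕ} {D : Set (EuclideanSpace ℝ (Fin N))} (hD : MeasurableSet D)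

theorem coeFn_chiMul (f : L2Space N) : chiMul hD f =ᵐ[volume] D.indicator f :=
  MemLp.coeFn_toLp _

theorem chiMul_eq_zero_iff {f : L2Space N} : chiMul hD f = 0 ↔ ∀ᵐ x, x ∈ D → f x = 0 := by
  simp only [Lp.eq_zero_iff_ae_eq_zero, ← Set.indicator_apply_eq_zero]
  exact ⟨fun h => (coeFn_chiMul hD f).symm.trans h, fun h => (coeFn_chiMul hD f).trans h⟩

theorem chiMul_zero : chiMul hD (0 : L2Space N) = 0 :=
  (chiMul_eq_zero_iff hD).2 ((Lp.coeFn_zero ℂ 2 volume).mono fun _ hx _ => hx)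

theorem inner_chiMul_self (f : L2Space N) :
    inner ℂ (chiMul hD f) (chiMul hD f) = inner ℂ f (chiMul hD f) := by
  simp only [L2.inner_def]
  refine integral_congr_ae ?_
  filter_upwards [coeFn_chiMul hD f] with x hx
  by_cases hxD : x ∈ D <;> simp [hx, hxD]

theorem chiMul_eq_zero_of_mem_orthogonal {K : Submodule ℂ (L2Space N)} {u : L2Space N}
    (hu : u ∈ K) (h : chiMul hD u ∈ Kᗮ) : chiMul hD u = 0 :=
  inner_self_eq_zero.1 <| by rw [inner_chiMul_self]; exact (K.mem_orthogonal _).1 h u hu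

end IndicatorMul

theorem fixedPoint_unique_single_general (N : ℕ)
    (S : Set (EuclideanSpace ℝ (Fin N))) (hS : IsCompact S)
    (K : Submodule ℂ (L2Space N))
    (hKset : (K : Set (L2Space N)) = {f : L2Space N | IsBandlimited S f})
    (hK : IsClosed (K : Set (L2Space N)))
    (h : L2Space N) (hh : IsBandlimited S h)
    (D : Set (EuclideanSpace ℝ (Fin N))) (hD : MeasurableSet D)
    (hDint : (interior D).Nonempty) :
    Tsingle K hK hD h h = h ∧
      ∀ f : L2Space N, IsBandlimited S f → Tsingle K hK hD h f = f → f = h := by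
  have hmem : ∀ f, f ∈ K ↔ IsBandlimited S f := fun f => Set.ext_iff.1 hKset f
  have hhK : h ∈ K := (hmem h).2 hh
  refine ⟨by rw [Tsingle, sub_self, chiMul_zero, add_zero, projOf_eq_self hK hhK],
    fun f hf hfix => ?_⟩
  have hdiff : h - f ∈ K := K.sub_mem hhK ((hmem f).2 hf)
  have hχ : chiMul hD (h - f) = 0 := chiMul_eq_zero_of_mem_orthogonal hD hdiff
    (mem_orthogonal_of_projOf_add_eq hK ((hmem f).2 hf) hfix)
  obtain ⟨F, hF, hFS, hF_ae⟩ := (hmem (h - f)).1 hdiff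
  have hD_zero : ∀ᵐ x, x ∈ D → 𝓕⁻ F x = 0 := by
    filter_upwards [(chiMul_eq_zero_iff hD).1 hχ, hF_ae] with x hx hxF using hxF ▸ hx
  have hF_zero := fourierInv_eq_zero_of_eqOn_zero hF (HasCompactSupport.intro hS hFS)
    isOpen_interior hDint (eqOn_interior_of_ae_imp_eq_zero hF.continuous_fourierInv hD_zero)
  rw [eq_comm, ← sub_eq_zero, Lp.eq_zero_iff_ae_eq_zero]
  filter_upwards [hF_ae] with x hx using hx.trans (congrFun hF_zero x)

/-- For `h ∈ B_S` and `D` a bounded measurable set with nonempty interior,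
`h` is the unique fixed point of `T_h^{(D)}` on `B_S`. -/
theorem fixedPoint_unique_single (N : ℕ) (hN : 1 ≤ N)
    (S : Set (EuclideanSpace ℝ (Fin N))) (hS : IsCompact S)
    (K : Submodule ℂ (L2Space N))
    (hKset : (K : Set (L2Space N)) = {f : L2Space N | IsBandlimited S f})
    (hK : IsClosed (K : Set (L2Space N)))
    (h : L2Space N) (hh : IsBandlimited S h)
    (D : Set (EuclideanSpace ℝ (Fin N))) (hD : MeasurableSet D)
    (hDbdd : Bornology.IsBounded D) (hDint : (interior D).Nonempty) :
    Tsingle K hK hD h h = h ∧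
      ∀ f : L2Space N, IsBandlimited S f → Tsingle K hK hD h f = f → f = h :=
  fixedPoint_unique_single_general N S hS K hKset hK h hh D hD hDint

end
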